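/- arXiv:math/9906085 — 5 statements merged into one kernel-verified Lean document; each statement's English description precedes it below -/
import Mathlib

section
/- Suppose a : X → X, q : X → ℝ, and η : X → ℝ are smooth (C^∞) on all of X, η is everywhere nonvanishing, and (Dη)(x) + q(x)·η(x) = 0 for all x, where the operators D and T on functions are defined by (Dψ)(x) = Dψ(x)[a(x)] and (Tψ)(x) = (Dψ)(x) + q(x)·ψ(x). Then for every natural number k and every smooth function ψ : X → ℝ, the k-th iterate satisfies T^k ψ = η · D^k(η⁻¹ · ψ). -/
/-- The first-order differential operator D = L associated with the vector field a. -/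
noncomputable def LagrangeL {X : Type*} [NormedAddCommGroup X] [NormedSpace ℝ X]
    (a : X → X) : (X → ℝ) → (X → ℝ) :=
  fun ψ x => fderiv ℝ ψ x (a x)

/-- The operator T = L + q. -/
noncomputable def LagrangeTq {X : Type*} [NormedAddCommGroup X] [NormedSpace ℝ X]
    (a : X → X) (q : X → ℝ) : (X → ℝ) → (X → ℝ) :=
  fun ψ x => LagrangeL a ψ x + q x * ψ x

lemma LagrangeL_smooth {X : Type*} [NormedAddCommGroup X] [NormedSpace ℝ X]
    {a : X → X} (ha : ContDiff ℝ (⊤ : ℕ∞) a) {ψ : X → ℝ} (hψ : ContDiff ℝ (⊤ : ℕ∞) ψ) :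
    ContDiff ℝ (⊤ : ℕ∞) (LagrangeL a ψ) :=
  (hψ.fderiv_right (by simp)).clm_apply ha

lemma LagrangeL_iter_smooth {X : Type*} [NormedAddCommGroup X] [NormedSpace ℝ X]
    {a : X → X} (ha : ContDiff ℝ (⊤ : ℕ∞) a) {ψ : X → ℝ} (hψ : ContDiff ℝ (⊤ : ℕ∞) ψ) (k : ℕ) :
    ContDiff ℝ (⊤ : ℕ∞) ((LagrangeL a)^[k] ψ) := by
  induction k with
  | zero => simpa using hψ
  | succ k ih =>
    rw [Function.iterate_succ_apply']
    exact LagrangeL_smooth ha ih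

/-- (L+q)^k = η L^k η⁻¹ for all natural k, for smooth data with nonvanishing η. -/
theorem Tq_pow_eq_eta_L_pow_eta_inv
    {X : Type*} [NormedAddCommGroup X] [NormedSpace ℝ X]
    (a : X → X) (q η : X → ℝ)
    (ha : ContDiff ℝ (⊤ : ℕ∞) a) (hq : ContDiff ℝ (⊤ : ℕ∞) q) (hη : ContDiff ℝ (⊤ : ℕ∞) η)
    (hη0 : ∀ x, η x ≠ 0)
    (hηeq : ∀ x, fderiv ℝ η x (a x) + q x * η x = 0) :
    ∀ (k : ℕ) (ψ : X → ℝ), ContDiff ℝ (⊤ : ℕ∞) ψ →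
      (LagrangeTq a q)^[k] ψ = fun x => η x * (LagrangeL a)^[k] (fun y => ψ y / η y) x := by
  have key : ∀ φ : X → ℝ, ContDiff ℝ (⊤ : ℕ∞) φ →
      LagrangeTq a q (fun y => η y * φ y) = fun x => η x * LagrangeL a φ x := by
    intro φ hφ
    funext x
    have hφd : DifferentiableAt ℝ φ x := (hφ.differentiable (by simp)).differentiableAt
    have hηd : DifferentiableAt ℝ η x := (hη.differentiable (by simp)).differentiableAt
    have hmul := fderiv_fun_mul hηd hφd
    have hLη : fderiv ℝ η x (a x) = -(q x * η x) := by linarith [hηeq x]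
    simp only [LagrangeTq, LagrangeL, hmul]
    rw [ContinuousLinearMap.add_apply, ContinuousLinearMap.smul_apply,
      ContinuousLinearMap.smul_apply, hLη]
    simp only [smul_eq_mul]
    ring
  intro k
  induction k with
  | zero =>
    intro ψ hψ
    funext x
    simp only [Function.iterate_zero, id_eq]
    field_simp [hη0 x]
  | succ k ih =>
    intro ψ hψ
    rw [Function.iterate_succ_apply', ih _ hψ]
    have hφ : ContDiff ℝ (⊤ : ℕ∞) (fun y => ψ y / η y) := hψ.div hη hη0
    rw [key _ (LagrangeL_iter_smooth ha hφ k)]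
    funext x
    rw [Function.iterate_succ_apply']
end

section
/- Let η be differentiable at every point of s, nonvanishing on s, and satisfy (Lη)(x) + q(x)·η(x) = 0 for all x ∈ s. Then for every real number α, the function |η|^α satisfies (L(|η|^α))(x) + α·q(x)·|η(x)|^α = 0 for all x ∈ s; consequently, for every ψ differentiable at every point of s and every x ∈ s, |η(x)|^(−α) · ( (L(|η|^α·ψ))(x) + α·q(x)·|η(x)|^α·ψ(x) ) = (Lψ)(x), i.e. L = |η|^(−α) (L + αq) |η|^α on s. -/
open Topology Filter

lemma abs_rpow_hasFDerivAt' {X : Type*} [NormedAddCommGroup X] [NormedSpace ℝ X]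
    {η : X → ℝ} {x : X} (hd : DifferentiableAt ℝ η x) (h0 : η x ≠ 0) (α : ℝ) :
    ∃ D : X →L[ℝ] ℝ, HasFDerivAt (fun y => |η y| ^ α) D x ∧
      ∀ v, D v = α * |η x| ^ (α - 2) * η x * fderiv ℝ η x v := by
  rcases h0.lt_or_gt with hneg | hpos
  · have hev : ∀ᶠ y in 𝓝 x, η y < 0 :=
      hd.continuousAt.eventually_lt continuousAt_const hneg
    have hev' : (fun y => |η y| ^ α) =ᶠ[𝓝 x] fun y => (-η y) ^ α := by
      filter_upwards [hev] with y hy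
      rw [abs_of_neg hy]
    have hg : HasFDerivAt (fun y => (-η y) ^ α)
        ((α * (-η x) ^ (α - 1)) • (-(fderiv ℝ η x))) x := by
      have := (Real.hasDerivAt_rpow_const (p := α)
        (Or.inl (neg_ne_zero.2 (ne_of_lt hneg)))).comp_hasFDerivAt x
        (hd.hasFDerivAt.neg)
      exact this
    refine ⟨_, hg.congr_of_eventuallyEq hev', ?_⟩
    intro v
    have hpos' : (0:ℝ) < -η x := neg_pos.2 hneg
    have key : (-η x) ^ (α - 1) = (-η x) ^ (α - 2) * (-η x) := by
      rw [← Real.rpow_add_one (ne_of_gt hpos'), show α - 2 + 1 = α - 1 by ring]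
    simp only [ContinuousLinearMap.coe_smul', Pi.smul_apply,
      ContinuousLinearMap.neg_apply, smul_eq_mul, abs_of_neg hneg, key]
    ring
  · have hev : ∀ᶠ y in 𝓝 x, 0 < η y :=
      continuousAt_const.eventually_lt hd.continuousAt hpos
    have hev' : (fun y => |η y| ^ α) =ᶠ[𝓝 x] fun y => (η y) ^ α := by
      filter_upwards [hev] with y hy
      rw [abs_of_pos hy]
    have hg : HasFDerivAt (fun y => (η y) ^ α)
        ((α * (η x) ^ (α - 1)) • (fderiv ℝ η x)) x := by
      have := (Real.hasDerivAt_rpow_const (p := α)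
        (Or.inl (ne_of_gt hpos))).comp_hasFDerivAt x hd.hasFDerivAt
      exact this
    refine ⟨_, hg.congr_of_eventuallyEq hev', ?_⟩
    intro v
    have key : (η x) ^ (α - 1) = (η x) ^ (α - 2) * (η x) := by
      rw [← Real.rpow_add_one (ne_of_gt hpos), show α - 2 + 1 = α - 1 by ring]
    simp only [ContinuousLinearMap.coe_smul', Pi.smul_apply, smul_eq_mul,
      abs_of_pos hpos, key]
    ring

/-- For any real α: (L + αq)(|η|^α) = 0 on s, and L = |η|^(−α) (L + αq) |η|^α on s. -/
theorem rpow_abs_solves_and_conjugates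
    {X : Type*} [NormedAddCommGroup X] [NormedSpace ℝ X]
    (s : Set X) (hs : IsOpen s) (a : X → X) (q : X → ℝ) (η : X → ℝ)
    (hηd : ∀ x ∈ s, DifferentiableAt ℝ η x)
    (hη0 : ∀ x ∈ s, η x ≠ 0)
    (hηeq : ∀ x ∈ s, fderiv ℝ η x (a x) + q x * η x = 0) :
    ∀ α : ℝ,
      (∀ x ∈ s,
        fderiv ℝ (fun y => |η y| ^ α) x (a x) + α * q x * |η x| ^ α = 0) ∧
      (∀ ψ : X → ℝ, (∀ x ∈ s, DifferentiableAt ℝ ψ x) →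
        ∀ x ∈ s,
          |η x| ^ (-α) *
            (fderiv ℝ (fun y => |η y| ^ α * ψ y) x (a x)
              + α * q x * |η x| ^ α * ψ x)
            = fderiv ℝ ψ x (a x)) := by
  intro α
  -- a pointwise key fact
  have main : ∀ x ∈ s, fderiv ℝ (fun y => |η y| ^ α) x (a x) = -(α * q x * |η x| ^ α) := by
    intro x hx
    obtain ⟨D, hD, hDv⟩ := abs_rpow_hasFDerivAt' (hηd x hx) (hη0 x hx) α
    rw [hD.fderiv, hDv]
    have hη' : fderiv ℝ η x (a x) = -(q x * η x) := by
      have := hηeq x hx; linarith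
    rw [hη']
    have habs : |η x| ^ (α - 2) * (η x * η x) = |η x| ^ α := by
      have h2 : η x * η x = |η x| ^ (2:ℝ) := by
        rw [show (2:ℝ) = ((2:ℕ):ℝ) by norm_num, Real.rpow_natCast]
        rw [pow_two, abs_mul_abs_self]
      rw [h2, ← Real.rpow_add (abs_pos.2 (hη0 x hx))]
      norm_num
    linear_combination (-(α * q x)) * habs
  constructor
  · intro x hx
    rw [main x hx]; ring
  · intro ψ hψ x hx
    obtain ⟨D, hD, hDv⟩ := abs_rpow_hasFDerivAt' (hηd x hx) (hη0 x hx) α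
    have hprod : HasFDerivAt (fun y => |η y| ^ α * ψ y)
        (|η x| ^ α • fderiv ℝ ψ x + ψ x • D) x :=
      hD.mul (hψ x hx).hasFDerivAt
    rw [hprod.fderiv]
    have hDval : D (a x) = -(α * q x * |η x| ^ α) := by
      have := main x hx
      rw [hD.fderiv] at this
      linarith
    simp only [ContinuousLinearMap.add_apply, ContinuousLinearMap.coe_smul',
      Pi.smul_apply, smul_eq_mul, hDval]
    have hcancel : |η x| ^ (-α) * |η x| ^ α = 1 := by
      rw [← Real.rpow_add (abs_pos.2 (hη0 x hx))]; norm_num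
    linear_combination (fderiv ℝ ψ x (a x)) * hcancel
end

section
/- Let η be differentiable at every point of s, nonvanishing on s, and satisfy (Lη)(x) + q(x)·η(x) = 0 for all x ∈ s. Let φ₁, …, φₘ : X → ℝ be differentiable at every point of s with (Lφᵢ)(x) = 0 for all x ∈ s and all i, and let f : ℝᵐ → ℝ be differentiable. Then the function ψ(x) = η(x) · f(φ₁(x), …, φₘ(x)) satisfies (Lψ)(x) + q(x)·ψ(x) = 0 for all x ∈ s. -/
/-! By the chain rule, `g = f ∘ (φ₁, …, φₘ)` is again a first integral (`Lg = 0`), and by the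
product rule `(L + q)(η g) = g · (L + q)η = 0`. -/

section FirstIntegral

variable {X F G : Type*} [NormedAddCommGroup X] [NormedSpace ℝ X]
  [NormedAddCommGroup F] [NormedSpace ℝ F] [NormedAddCommGroup G] [NormedSpace ℝ G]
  {ι : Type*} [Fintype ι]

theorem fderiv_comp_pi_apply_eq_zero {φ : ι → X → F} {f : (ι → F) → G} {x v : X}
    (hφ : ∀ i, DifferentiableAt ℝ (φ i) x) (hf : DifferentiableAt ℝ f (fun i => φ i x))
    (hφv : ∀ i, fderiv ℝ (φ i) x v = 0) :
    fderiv ℝ (fun y => f (fun i => φ i y)) x v = 0 := by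
  have hΦ : DifferentiableAt ℝ (fun y i => φ i y) x := differentiableAt_pi.2 hφ
  have hΦv : fderiv ℝ (fun y i => φ i y) x v = 0 := by
    funext i
    rw [fderiv_pi hφ]
    exact hφv i
  rw [← Function.comp_def, fderiv_comp x hf hΦ, ContinuousLinearMap.comp_apply, hΦv, map_zero]

theorem fderiv_mul_apply_add_eq_zero_of_fderiv_apply_eq_zero {η g : X → ℝ} {x v : X} {c : ℝ}
    (hη : DifferentiableAt ℝ η x) (hg : DifferentiableAt ℝ g x)
    (hηv : fderiv ℝ η x v + c * η x = 0) (hgv : fderiv ℝ g x v = 0) :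
    fderiv ℝ (fun y => η y * g y) x v + c * (η x * g x) = 0 := by
  rw [fderiv_fun_mul hη hg]
  simp only [add_apply, smul_apply, smul_eq_mul, hgv]
  linear_combination g x * hηv

end FirstIntegral

theorem general_solution_nonhomogeneous_general
    {X : Type*} [NormedAddCommGroup X] [NormedSpace ℝ X]
    (s : Set X) (a : X → X) (q : X → ℝ) (η : X → ℝ)
    (hηd : ∀ x ∈ s, DifferentiableAt ℝ η x)
    (hηeq : ∀ x ∈ s, fderiv ℝ η x (a x) + q x * η x = 0)
    (m : ℕ) (φ : Fin m → X → ℝ)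
    (hφd : ∀ i, ∀ x ∈ s, DifferentiableAt ℝ (φ i) x)
    (hφeq : ∀ i, ∀ x ∈ s, fderiv ℝ (φ i) x (a x) = 0)
    (f : (Fin m → ℝ) → ℝ) (hf : Differentiable ℝ f) :
    ∀ x ∈ s,
      fderiv ℝ (fun y => η y * f (fun i => φ i y)) x (a x)
          + q x * (η x * f (fun i => φ i x)) = 0 := by
  intro x hx
  have hφx : ∀ i, DifferentiableAt ℝ (φ i) x := fun i => hφd i x hx
  have hfφ : DifferentiableAt ℝ (fun y => f (fun i => φ i y)) x :=
    (hf _).comp x (differentiableAt_pi.2 hφx)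
  exact fderiv_mul_apply_add_eq_zero_of_fderiv_apply_eq_zero (hηd x hx) hfφ (hηeq x hx)
    (fderiv_comp_pi_apply_eq_zero hφx (hf _) fun i => hφeq i x hx)

/-- If Lφᵢ = 0 on s for each i and (L+q)η = 0 on s, then ψ = η·f(φ₁,…,φₘ)
solves (L+q)ψ = 0 on s. -/
theorem general_solution_nonhomogeneous
    {X : Type*} [NormedAddCommGroup X] [NormedSpace ℝ X]
    (s : Set X) (hs : IsOpen s) (a : X → X) (q : X → ℝ) (η : X → ℝ)
    (hηd : ∀ x ∈ s, DifferentiableAt ℝ η x)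
    (hη0 : ∀ x ∈ s, η x ≠ 0)
    (hηeq : ∀ x ∈ s, fderiv ℝ η x (a x) + q x * η x = 0)
    (m : ℕ) (φ : Fin m → X → ℝ)
    (hφd : ∀ i, ∀ x ∈ s, DifferentiableAt ℝ (φ i) x)
    (hφeq : ∀ i, ∀ x ∈ s, fderiv ℝ (φ i) x (a x) = 0)
    (f : (Fin m → ℝ) → ℝ) (hf : Differentiable ℝ f) :
    ∀ x ∈ s,
      fderiv ℝ (fun y => η y * f (fun i => φ i y)) x (a x)
          + q x * (η x * f (fun i => φ i x)) = 0 :=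
  general_solution_nonhomogeneous_general s a q η hηd hηeq m φ hφd hφeq f hf
end

section
/- Let η, η₁, …, ηₘ : X → ℝ all be differentiable at every point of s with (Lη)(x) + q(x)·η(x) = 0 and (Lηⱼ)(x) + q(x)·ηⱼ(x) = 0 for all x ∈ s and all j, and suppose η is nonvanishing on s. Then for every differentiable function f : ℝᵐ → ℝ, the function ψ(x) = η(x) · f(η₁(x)/η(x), …, ηₘ(x)/η(x)) satisfies (Lψ)(x) + q(x)·ψ(x) = 0 for all x ∈ s. -/
/-! The ratios `ηⱼ / η` of solutions of `(L + q) u = 0` are first integrals of `L`, i.e. `L(ηⱼ / η) = 0`;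
hence so is any differentiable function `f` of them, and multiplying a first integral by the
solution `η` gives again a solution, by the Leibniz rule for the derivation `L`. -/

section FirstIntegrals

variable {𝕜 : Type*} [NontriviallyNormedField 𝕜]
  {E : Type*} [NormedAddCommGroup E] [NormedSpace 𝕜 E]
  {F : Type*} [NormedAddCommGroup F] [NormedSpace 𝕜 F]
  {G : Type*} [NormedAddCommGroup G] [NormedSpace 𝕜 G]
  {x v : E} {μ : 𝕜}

theorem HasFDerivAt.fun_div {c d : E → 𝕜} {c' d' : E →L[𝕜] 𝕜}
    (hc : HasFDerivAt c c' x) (hd : HasFDerivAt d d' x) (hx : d x ≠ 0) :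
    HasFDerivAt (fun y => c y / d y) ((d x ^ 2)⁻¹ • (d x • c' - c x • d')) x := by
  have hinv : HasFDerivAt (fun y => (d y)⁻¹) (-(d x ^ 2)⁻¹ • d') x :=
    (hasDerivAt_inv hx).comp_hasFDerivAt x hd
  simp only [div_eq_mul_inv]
  refine (hc.fun_mul hinv).congr_fderiv ?_
  ext v
  simp only [add_apply, smul_apply, sub_apply, smul_eq_mul]
  field_simp
  ring

theorem fderiv_div_apply_eq_zero_of_apply_add_mul_eq_zero {η ζ : E → 𝕜}
    (hη : DifferentiableAt 𝕜 η x) (hζ : DifferentiableAt 𝕜 ζ x) (hη0 : η x ≠ 0)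
    (hηeq : fderiv 𝕜 η x v + μ * η x = 0) (hζeq : fderiv 𝕜 ζ x v + μ * ζ x = 0) :
    fderiv 𝕜 (fun y => ζ y / η y) x v = 0 := by
  rw [(hζ.hasFDerivAt.fun_div hη.hasFDerivAt hη0).fderiv]
  simp only [smul_apply, sub_apply, smul_eq_mul]
  linear_combination (η x ^ 2)⁻¹ * (η x * hζeq - ζ x * hηeq)

theorem fderiv_comp_apply_eq_zero {f : F → G} {g : E → F}
    (hf : DifferentiableAt 𝕜 f (g x)) (hg : DifferentiableAt 𝕜 g x)
    (hgv : fderiv 𝕜 g x v = 0) :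
    fderiv 𝕜 (fun y => f (g y)) x v = 0 := by
  rw [fderiv_fun_comp x hf hg, ContinuousLinearMap.comp_apply, hgv, map_zero]

theorem fderiv_pi_apply_eq_zero {ι : Type*} [Fintype ι] {g : ι → E → 𝕜}
    (hg : ∀ i, DifferentiableAt 𝕜 (g i) x) (hgv : ∀ i, fderiv 𝕜 (g i) x v = 0) :
    fderiv 𝕜 (fun y i => g i y) x v = 0 := by
  rw [fderiv_pi hg]
  exact funext hgv

theorem fderiv_mul_apply_add_mul_eq_zero {η φ : E → 𝕜}
    (hη : DifferentiableAt 𝕜 η x) (hφ : DifferentiableAt 𝕜 φ x)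
    (hηeq : fderiv 𝕜 η x v + μ * η x = 0) (hφv : fderiv 𝕜 φ x v = 0) :
    fderiv 𝕜 (fun y => η y * φ y) x v + μ * (η x * φ x) = 0 := by
  rw [fderiv_fun_mul hη hφ]
  simp only [add_apply, smul_apply, smul_eq_mul, hφv]
  linear_combination φ x * hηeq

end FirstIntegrals

theorem solution_from_ratios_general
    {X : Type*} [NormedAddCommGroup X] [NormedSpace ℝ X]
    (s : Set X) (a : X → X) (q : X → ℝ) (η : X → ℝ)
    (hηd : ∀ x ∈ s, DifferentiableAt ℝ η x)
    (hη0 : ∀ x ∈ s, η x ≠ 0)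
    (hηeq : ∀ x ∈ s, fderiv ℝ η x (a x) + q x * η x = 0)
    (m : ℕ) (ηs : Fin m → X → ℝ)
    (hηsd : ∀ j, ∀ x ∈ s, DifferentiableAt ℝ (ηs j) x)
    (hηseq : ∀ j, ∀ x ∈ s, fderiv ℝ (ηs j) x (a x) + q x * ηs j x = 0)
    (f : (Fin m → ℝ) → ℝ) (hf : Differentiable ℝ f) :
    ∀ x ∈ s,
      fderiv ℝ (fun y => η y * f (fun j => ηs j y / η y)) x (a x)
          + q x * (η x * f (fun j => ηs j x / η x)) = 0 := by
  intro x hx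
  have hratio_diff : ∀ j, DifferentiableAt ℝ (fun y => ηs j y / η y) x := fun j =>
    ((hηsd j x hx).hasFDerivAt.fun_div (hηd x hx).hasFDerivAt (hη0 x hx)).differentiableAt
  have hratios_diff : DifferentiableAt ℝ (fun y j => ηs j y / η y) x :=
    differentiableAt_pi.2 hratio_diff
  have hratios : fderiv ℝ (fun y j => ηs j y / η y) x (a x) = 0 :=
    fderiv_pi_apply_eq_zero hratio_diff fun j =>
      fderiv_div_apply_eq_zero_of_apply_add_mul_eq_zero (hηd x hx) (hηsd j x hx) (hη0 x hx)
        (hηeq x hx) (hηseq j x hx)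
  exact fderiv_mul_apply_add_mul_eq_zero (hηd x hx) ((hf _).comp x hratios_diff) (hηeq x hx)
    (fderiv_comp_apply_eq_zero (hf _) hratios_diff hratios)

/-- If η, η₁, …, ηₘ all solve (L+q)·=0 on s and η is nonvanishing,
then ψ = η·f(η₁/η, …, ηₘ/η) solves (L+q)ψ = 0 on s. -/
theorem solution_from_ratios
    {X : Type*} [NormedAddCommGroup X] [NormedSpace ℝ X]
    (s : Set X) (hs : IsOpen s) (a : X → X) (q : X → ℝ) (η : X → ℝ)
    (hηd : ∀ x ∈ s, DifferentiableAt ℝ η x)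
    (hη0 : ∀ x ∈ s, η x ≠ 0)
    (hηeq : ∀ x ∈ s, fderiv ℝ η x (a x) + q x * η x = 0)
    (m : ℕ) (ηs : Fin m → X → ℝ)
    (hηsd : ∀ j, ∀ x ∈ s, DifferentiableAt ℝ (ηs j) x)
    (hηseq : ∀ j, ∀ x ∈ s, fderiv ℝ (ηs j) x (a x) + q x * ηs j x = 0)
    (f : (Fin m → ℝ) → ℝ) (hf : Differentiable ℝ f) :
    ∀ x ∈ s,
      fderiv ℝ (fun y => η y * f (fun j => ηs j y / η y)) x (a x)
          + q x * (η x * f (fun j => ηs j x / η x)) = 0 :=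
  solution_from_ratios_general s a q η hηd hη0 hηeq m ηs hηsd hηseq f hf
end

section
/- Let b : X → ℝ, and let χ, χ₀, χ₁ be differentiable at every point of s, each satisfying (L·)(x) + q(x)·(·)(x) = b(x) for all x ∈ s, with χ₁(x) ≠ χ₀(x) for all x ∈ s. Then the ratio φ(x) = (χ(x) − χ₀(x)) / (χ₁(x) − χ₀(x)) satisfies the homogeneous equation (Lφ)(x) = 0 for all x ∈ s. -/
/-!
Both differences `u = χ - χ₀` and `v = χ₁ - χ₀` solve the homogeneous equation `L u + q u = 0`,
so by the quotient rule `L (u / v) = (v L u - u L v) / v² = (-q u v + q u v) / v² = 0`.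
-/

section QuotientRule

variable {𝕜 E : Type*} [NontriviallyNormedField 𝕜] [NormedAddCommGroup E] [NormedSpace 𝕜 E]
  {u v : E → 𝕜} {u' v' : E →L[𝕜] 𝕜} {x : E}

theorem HasFDerivAt.fun_div_s14 (hu : HasFDerivAt u u' x) (hv : HasFDerivAt v v' x) (hx : v x ≠ 0) :
    HasFDerivAt (fun y => u y / v y) ((v x ^ 2)⁻¹ • (v x • u' - u x • v')) x := by
  have h := hu.fun_mul ((hasFDerivAt_inv hx).comp x hv)
  simp only [Function.comp_def, ← div_eq_mul_inv] at h
  refine h.congr_fderiv ?_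
  ext w
  simp only [add_apply, smul_apply, sub_apply, ContinuousLinearMap.comp_apply,
    ContinuousLinearMap.toSpanSingleton_apply, smul_eq_mul]
  field_simp
  ring

theorem fderiv_div_apply_eq_zero_of_apply_add_mul_eq_zero_s14 (hu : HasFDerivAt u u' x)
    (hv : HasFDerivAt v v' x) (hx : v x ≠ 0) {w : E} {c : 𝕜}
    (hu_eq : u' w + c * u x = 0) (hv_eq : v' w + c * v x = 0) :
    fderiv 𝕜 (fun y => u y / v y) x w = 0 := by
  rw [(hu.fun_div_s14 hv hx).fderiv]
  simp only [smul_apply, sub_apply, smul_eq_mul, eq_neg_of_add_eq_zero_left hu_eq,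
    eq_neg_of_add_eq_zero_left hv_eq]
  ring

end QuotientRule

theorem ratio_of_solution_differences_homogeneous_general
    {X : Type*} [NormedAddCommGroup X] [NormedSpace ℝ X]
    (s : Set X) (a : X → X) (q b : X → ℝ) (χ χ₀ χ₁ : X → ℝ)
    (hχd : ∀ x ∈ s, DifferentiableAt ℝ χ x)
    (hχ₀d : ∀ x ∈ s, DifferentiableAt ℝ χ₀ x)
    (hχ₁d : ∀ x ∈ s, DifferentiableAt ℝ χ₁ x)
    (hχeq : ∀ x ∈ s, fderiv ℝ χ x (a x) + q x * χ x = b x)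
    (hχ₀eq : ∀ x ∈ s, fderiv ℝ χ₀ x (a x) + q x * χ₀ x = b x)
    (hχ₁eq : ∀ x ∈ s, fderiv ℝ χ₁ x (a x) + q x * χ₁ x = b x)
    (hne : ∀ x ∈ s, χ₁ x ≠ χ₀ x) :
    ∀ x ∈ s,
      fderiv ℝ (fun y => (χ y - χ₀ y) / (χ₁ y - χ₀ y)) x (a x) = 0 := by
  intro x hx
  have hχ₀ := (hχ₀d x hx).hasFDerivAt
  refine fderiv_div_apply_eq_zero_of_apply_add_mul_eq_zero_s14
    ((hχd x hx).hasFDerivAt.fun_sub hχ₀) ((hχ₁d x hx).hasFDerivAt.fun_sub hχ₀)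
    (sub_ne_zero.mpr (hne x hx)) (c := q x) ?_ ?_
  · linear_combination (norm := (simp only [sub_apply]; ring)) hχeq x hx - hχ₀eq x hx
  · linear_combination (norm := (simp only [sub_apply]; ring)) hχ₁eq x hx - hχ₀eq x hx

/-- If χ, χ₀, χ₁ solve (L+q)·= b on s and χ₁ − χ₀ is nonvanishing on s,
then (χ − χ₀)/(χ₁ − χ₀) solves the homogeneous equation on s. -/
theorem ratio_of_solution_differences_homogeneous
    {X : Type*} [NormedAddCommGroup X] [NormedSpace ℝ X]
    (s : Set X) (hs : IsOpen s) (a : X → X) (q b : X → ℝ) (χ χ₀ χ₁ : X → ℝ)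
    (hχd : ∀ x ∈ s, DifferentiableAt ℝ χ x)
    (hχ₀d : ∀ x ∈ s, DifferentiableAt ℝ χ₀ x)
    (hχ₁d : ∀ x ∈ s, DifferentiableAt ℝ χ₁ x)
    (hχeq : ∀ x ∈ s, fderiv ℝ χ x (a x) + q x * χ x = b x)
    (hχ₀eq : ∀ x ∈ s, fderiv ℝ χ₀ x (a x) + q x * χ₀ x = b x)
    (hχ₁eq : ∀ x ∈ s, fderiv ℝ χ₁ x (a x) + q x * χ₁ x = b x)
    (hne : ∀ x ∈ s, χ₁ x ≠ χ₀ x) :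
    ∀ x ∈ s,
      fderiv ℝ (fun y => (χ y - χ₀ y) / (χ₁ y - χ₀ y)) x (a x) = 0 :=
  ratio_of_solution_differences_homogeneous_general s a q b χ χ₀ χ₁ hχd hχ₀d hχ₁d hχeq hχ₀eq hχ₁eq
    hne
end
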